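/- For every u = (u_0, …, u_{n−1}) ∈ 𝔽_q^n, the unique polynomial f of degree less than n satisfying f(α^j) = u_j for all 0 ≤ j ≤ n−1 is given by f = Σ_{i=0}^{n−1} (−u(α^{n−i})) x^i; equivalently, the inverse of the map (v_0,…,v_{n−1}) ↦ (v(1), v(α), …, v(α^{n−1})) sends (u_0,…,u_{n−1}) to the coefficient vector (−u(α^n), −u(α^{n−1}), …, −u(α)). -/

import Mathlib

/-! Evaluating `f` at `α ^ i` and exchanging the two sums gives
`-∑ j, u j * ∑ k < n, (α ^ i / α ^ j) ^ k`. The inner geometric sum is `n` for `j = i` and `0`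
otherwise, since `α ^ i / α ^ j` is an `n`-th root of unity different from `1`; and `n = q - 1`
is `-1` in `𝔽_q`, which cancels the sign. -/

open Polynomial Finset

theorem Polynomial.degree_sum_range_C_mul_X_pow_lt {R : Type*} [Semiring R] (c : ℕ → R) (n : ℕ) :
    (∑ i ∈ range n, C (c i) * X ^ i).degree < (n : WithBot ℕ) := by
  rw [← Fin.sum_univ_eq_sum_range (fun i => C (c i) * X ^ i)]
  exact degree_sum_fin_lt _

theorem geom_sum_eq_zero_of_pow_eq_one {K : Type*} [Field K] {r : K} {n : ℕ} (hrn : r ^ n = 1)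
    (hr : r ≠ 1) : ∑ k ∈ range n, r ^ k = 0 := by
  rw [geom_sum_eq hr, hrn, sub_self, zero_div]

theorem FiniteField.cast_card_sub_one (F : Type*) [Field F] [Fintype F] :
    ((Fintype.card F - 1 : ℕ) : F) = -1 := by
  rw [Nat.cast_sub Fintype.card_pos, FiniteField.cast_card_eq_zero, Nat.cast_one, zero_sub]

theorem ne_zero_of_orderOf_ne_zero {M₀ : Type*} [MonoidWithZero M₀] [Nontrivial M₀] {a : M₀}
    (ha : orderOf a ≠ 0) : a ≠ 0 :=
  fun h => ha (h ▸ orderOf_zero M₀)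

section RootOfUnity

variable {K : Type*} [Field K] {α : K} {n : ℕ}

theorem sum_pow_div_pow_pow_eq_ite (hα : orderOf α = n) (i j : Fin n) :
    ∑ k ∈ range n, (α ^ (i : ℕ) / α ^ (j : ℕ)) ^ k = if i = j then (n : K) else 0 := by
  have hαn : α ^ n = 1 := hα ▸ pow_orderOf_eq_one α
  have hα0 : α ≠ 0 := ne_zero_of_orderOf_ne_zero (hα ▸ i.pos.ne')
  split_ifs with hij
  · simp [hij, div_self (pow_ne_zero _ hα0)]
  · refine geom_sum_eq_zero_of_pow_eq_one ?_ ?_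
    · rw [div_pow, pow_right_comm α (i : ℕ), pow_right_comm α (j : ℕ), hαn, one_pow, one_pow,
        div_one]
    · rw [Ne, div_eq_one_iff_eq (pow_ne_zero _ hα0)]
      exact fun h => hij (Fin.ext (pow_injOn_Iio_orderOf (by simp [hα]) (by simp [hα]) h))

theorem sum_neg_sum_mul_pow_mul_pow_eq (hα : orderOf α = n) (u : Fin n → K) (i : Fin n) :
    ∑ k ∈ range n, -(∑ j : Fin n, u j * (α ^ (n - k)) ^ (j : ℕ)) * (α ^ (i : ℕ)) ^ k
      = -(n : K) * u i := by
  have hαn : α ^ n = 1 := hα ▸ pow_orderOf_eq_one α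
  have hα0 : α ≠ 0 := ne_zero_of_orderOf_ne_zero (hα ▸ i.pos.ne')
  have hterm : ∀ j : Fin n, ∀ k ∈ range n,
      (α ^ (n - k)) ^ (j : ℕ) * (α ^ (i : ℕ)) ^ k = (α ^ (i : ℕ) / α ^ (j : ℕ)) ^ k := by
    intro j k hk
    rw [pow_sub₀ α hα0 (mem_range.mp hk).le, hαn]
    ring
  calc ∑ k ∈ range n, -(∑ j : Fin n, u j * (α ^ (n - k)) ^ (j : ℕ)) * (α ^ (i : ℕ)) ^ k
      = -∑ j : Fin n, u j * ∑ k ∈ range n, (α ^ (n - k)) ^ (j : ℕ) * (α ^ (i : ℕ)) ^ k := by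
        simp only [neg_mul, sum_neg_distrib, sum_mul, mul_sum, mul_assoc]
        rw [sum_comm]
    _ = -∑ j : Fin n, u j * if i = j then (n : K) else 0 := by
        simp only [sum_congr rfl (hterm _), sum_pow_div_pow_pow_eq_ite hα]
    _ = -(n : K) * u i := by simp [mul_comm]

end RootOfUnity

/-- the unique polynomial of degree `< n` interpolating `u` at the powers of
`α` is `f = ∑_{i=0}^{n-1} (-u(α^{n-i})) x^i`, where `u(β) = ∑_j u_j β^j`. -/
theorem stmt_6 {F : Type*} [Field F] [Fintype F] (α : F)
    (n : ℕ) (hn : n = Fintype.card F - 1) (hα : orderOf α = n)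
    (u : Fin n → F) :
    let f : Polynomial F := ∑ i ∈ Finset.range n,
      Polynomial.C (-(∑ j : Fin n, u j * (α ^ (n - i)) ^ (j : ℕ))) * Polynomial.X ^ i
    f.degree < (n : WithBot ℕ) ∧ ∀ i : Fin n, f.eval (α ^ (i : ℕ)) = u i := by
  refine ⟨degree_sum_range_C_mul_X_pow_lt _ n, fun i => ?_⟩
  simp only [eval_finsetSum, eval_mul, eval_C, eval_pow, eval_X]
  rw [sum_neg_sum_mul_pow_mul_pow_eq hα, hn, FiniteField.cast_card_sub_one, neg_neg, one_mul]
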